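/- Let S be a random walk on ℤ with i.i.d. integrable increments of zero mean. Then S is recurrent: almost surely S_n = 0 for infinitely many n (Chung–Fuchs theorem in dimension one for integer-valued walks). -/

import Mathlib

/-!
Let `G N` be the expected number of visits to `0` up to time `N` and `r` the probability of
returning to `0`. Splitting a visit to `a` at the first visit to `a` and using the independence
and stationarity of the increments after that time gives `∑_{1 ≤ n ≤ N} P(S_n = a) ≤ r_a G N`,
where `r_a` is the probability of ever visiting `a`. For `a = 0` this is the renewal bound `G N ≤ 1 + r G N`, so `r < 1` would make `G` bounded by
`1 / (1 - r)`. On the other hand, by the law of large numbers `|S_n| ≤ εn` with probability at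
least `1/2` for large `n`; these `≈ N/2` units of mass up to time `N` are spread over the
`≈ 2εN` sites of `[-εN, εN]`, each carrying at most `G N`, so `G N ≳ 1 / (4ε)` for every `ε`.
Hence `r = 1`, and by stationarity the walk returns to its current position after every time.
-/

open MeasureTheory ProbabilityTheory Finset Filter

lemma Set.infinite_of_forall_mem_exists_gt {s : Set ℕ} (hs : s.Nonempty)
    (h : ∀ j ∈ s, ∃ k ∈ s, j < k) : s.Infinite := fun hfin ↦
  let ⟨_, hk, hlt⟩ := h _ (Nat.sSup_mem hs hfin.bddAbove)
  (le_csSup hfin.bddAbove hk).not_gt hlt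

lemma sum_Icc_sum_Icc_mul_sub_le {f g : ℕ → ℝ} (hf : ∀ k, 0 ≤ f k) (hg : ∀ m, 0 ≤ g m)
    (N : ℕ) :
    ∑ n ∈ Icc 1 N, ∑ k ∈ Icc 1 n, f k * g (n - k) ≤
      (∑ k ∈ Icc 1 N, f k) * ∑ m ∈ range (N + 1), g m := by
  rw [sum_comm' (t' := Icc 1 N) (s' := fun k ↦ Icc k N) (by intro n k; simp only [mem_Icc]; omega),
    sum_mul]
  refine sum_le_sum fun k _ ↦ ?_
  rw [← mul_sum]
  refine mul_le_mul_of_nonneg_left ?_ (hf k)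
  rw [← Ico_add_one_right_eq_Icc, sum_Ico_eq_sum_range]
  simp only [add_tsub_cancel_left]
  exact sum_le_sum_of_subset_of_nonneg (range_subset_range.2 (by omega)) fun m _ _ ↦ hg m

lemma card_Icc_neg_floor_le {t : ℝ} (ht : 0 ≤ t) : ((Icc (-⌊t⌋) ⌊t⌋).card : ℝ) ≤ 2 * t + 1 := by
  have hfloor : 0 ≤ ⌊t⌋ := Int.floor_nonneg.2 ht
  have hcardℤ : ((Icc (-⌊t⌋) ⌊t⌋).card : ℤ) = 2 * ⌊t⌋ + 1 := by rw [Int.card_Icc]; omega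
  have hcardℝ : ((Icc (-⌊t⌋) ⌊t⌋).card : ℝ) = 2 * ⌊t⌋ + 1 := by exact_mod_cast hcardℤ
  linarith [Int.floor_le t]

namespace RandomWalk

def partialSum (x : ℕ → ℤ) (n : ℕ) : ℤ := ∑ i ∈ range n, x i

def IsFirstVisit (x : ℕ → ℤ) (a : ℤ) (k : ℕ) : Prop :=
  0 < k ∧ partialSum x k = a ∧ ∀ j, 0 < j → j < k → partialSum x j ≠ a

lemma partialSum_add (x : ℕ → ℤ) (k m : ℕ) :
    partialSum x (k + m) = partialSum x k + partialSum (fun i ↦ x (i + k)) m := by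
  simp only [partialSum, sum_range_add, add_comm _ k]

lemma measurable_partialSum (n : ℕ) : Measurable (partialSum · n) := by
  unfold partialSum
  fun_prop

lemma IsFirstVisit.eq {x : ℕ → ℤ} {a : ℤ} {k l : ℕ} (hk : IsFirstVisit x a k)
    (hl : IsFirstVisit x a l) : k = l := by
  by_contra hne
  rcases Nat.lt_or_gt_of_ne hne with h | h
  · exact hl.2.2 k hk.1 h hk.2.1
  · exact hk.2.2 l hl.1 h hl.2.1

lemma partialSum_eq_iff_exists_isFirstVisit {x : ℕ → ℤ} {a : ℤ} {n : ℕ} (hn : 0 < n) :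
    partialSum x n = a ↔
      ∃ k ∈ Icc 1 n, IsFirstVisit x a k ∧ partialSum (fun i ↦ x (i + k)) (n - k) = 0 := by
  classical
  constructor
  · intro hxn
    have hex : ∃ j, 0 < j ∧ partialSum x j = a := ⟨n, hn, hxn⟩
    obtain ⟨hpos, hval⟩ := Nat.find_spec hex
    have hle : Nat.find hex ≤ n := Nat.find_min' hex ⟨hn, hxn⟩
    refine ⟨Nat.find hex, mem_Icc.2 ⟨hpos, hle⟩,
      ⟨hpos, hval, fun j hj hjk hxj ↦ Nat.find_min hex hjk ⟨hj, hxj⟩⟩, ?_⟩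
    have := partialSum_add x (Nat.find hex) (n - Nat.find hex)
    rw [Nat.add_sub_cancel' hle] at this
    omega
  · rintro ⟨k, hk, ⟨-, hxk, -⟩, hrest⟩
    have := partialSum_add x k (n - k)
    rw [Nat.add_sub_cancel' (mem_Icc.1 hk).2] at this
    omega

section

variable {Ω : Type*} {X : ℕ → Ω → ℤ}

/-- Indexed by `i + k` so that `incrementsFrom X 0 ω` is definitionally `(X · ω)`. -/
def incrementsFrom (X : ℕ → Ω → ℤ) (k : ℕ) (ω : Ω) : ℕ → ℤ := fun i ↦ X (i + k) ω

def walk (X : ℕ → Ω → ℤ) (n : ℕ) (ω : Ω) : ℤ := partialSum (incrementsFrom X 0 ω) n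

@[simp]
lemma walk_zero (ω : Ω) : walk X 0 ω = 0 := rfl

lemma walk_succ (n : ℕ) (ω : Ω) : walk X (n + 1) ω = walk X n ω + X n ω :=
  sum_range_succ _ n

abbrev pastSigma (X : ℕ → Ω → ℤ) (k : ℕ) : MeasurableSpace Ω :=
  ⨆ i ∈ Set.Iio k, MeasurableSpace.comap (X i) inferInstance

abbrev futureSigma (X : ℕ → Ω → ℤ) (k : ℕ) : MeasurableSpace Ω :=
  ⨆ i ∈ Set.Ici k, MeasurableSpace.comap (X i) inferInstance

lemma measurable_incrementsFrom_futureSigma (k : ℕ) :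
    Measurable[futureSigma X k] (incrementsFrom X k) :=
  @measurable_pi_lambda _ _ _ (futureSigma X k) _ _ fun i ↦ (comap_measurable (X (i + k))).mono
    (le_iSup₂ (f := fun j (_ : j ∈ Set.Ici k) ↦ MeasurableSpace.comap (X j) inferInstance)
      (i + k) (Nat.le_add_left k i)) le_rfl

lemma measurable_walk_pastSigma {j k : ℕ} (hjk : j ≤ k) : Measurable[pastSigma X k] (walk X j) :=
  Finset.measurable_sum _ fun i hi ↦ (comap_measurable (X i)).mono
    (le_iSup₂ (f := fun j (_ : j ∈ Set.Iio k) ↦ MeasurableSpace.comap (X j) inferInstance)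
      i (lt_of_lt_of_le (mem_range.1 hi) hjk)) le_rfl

lemma measurableSet_isFirstVisit_pastSigma (a : ℤ) (k : ℕ) :
    MeasurableSet[pastSigma X k] {ω | IsFirstVisit (incrementsFrom X 0 ω) a k} := by
  simp only [IsFirstVisit, Set.ofPred_and, Set.ofPred_forall]
  exact (MeasurableSet.const _).inter
    ((measurable_walk_pastSigma le_rfl (measurableSet_singleton a)).inter
      (MeasurableSet.iInter fun j ↦ MeasurableSet.iInter fun _ ↦ MeasurableSet.iInter fun hj ↦
        (measurable_walk_pastSigma hj.le (measurableSet_singleton a)).compl))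

end

variable {Ω : Type*} {mΩ : MeasurableSpace Ω} {μ : Measure Ω} {X : ℕ → Ω → ℤ}

structure IsIID (μ : Measure Ω) (X : ℕ → Ω → ℤ) : Prop where
  measurable : ∀ n, Measurable (X n)
  indep : iIndepFun X μ
  identDistrib : ∀ n, IdentDistrib (X n) (X 0) μ μ

lemma measurable_walk (hXmeas : ∀ n, Measurable (X n)) (n : ℕ) : Measurable (walk X n) :=
  Finset.measurable_sum (range n) fun i _ ↦ hXmeas i

lemma measurable_incrementsFrom (hXmeas : ∀ n, Measurable (X n)) (k : ℕ) :
    Measurable (incrementsFrom X k) :=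
  measurable_pi_lambda _ fun i ↦ hXmeas (i + k)

lemma pastSigma_le (hXmeas : ∀ n, Measurable (X n)) (k : ℕ) : pastSigma X k ≤ mΩ :=
  iSup₂_le fun i _ ↦ (hXmeas i).comap_le

lemma IsIID.identDistrib_incrementsFrom (hX : IsIID μ X) (k : ℕ) :
    IdentDistrib (incrementsFrom X k) (incrementsFrom X 0) μ μ :=
  IdentDistrib.pi (fun i ↦ (hX.identDistrib (i + k)).trans (hX.identDistrib i).symm)
    (hX.indep.precomp (add_left_injective k)) (hX.indep.precomp (add_left_injective 0))

lemma IsIID.indep_pastSigma_futureSigma (hX : IsIID μ X) (k : ℕ) :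
    Indep (pastSigma X k) (futureSigma X k) μ :=
  indep_iSup_of_disjoint (fun i ↦ (hX.measurable i).comap_le)
    ((iIndepFun_iff_iIndep _ _ _).1 hX.indep) (Set.Iio_disjoint_Ici le_rfl)

lemma IsIID.measureReal_inter_incrementsFrom_preimage (hX : IsIID μ X) {k : ℕ} {A : Set Ω}
    (hA : MeasurableSet[pastSigma X k] A) {B : Set (ℕ → ℤ)} (hB : MeasurableSet B) :
    μ.real (A ∩ incrementsFrom X k ⁻¹' B) = μ.real A * μ.real (incrementsFrom X 0 ⁻¹' B) := by
  rw [measureReal_def, (Indep_iff _ _ _).1 (hX.indep_pastSigma_futureSigma k) A _ hA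
    (measurable_incrementsFrom_futureSigma k hB),
    (hX.identDistrib_incrementsFrom k).measure_mem_eq hB, ENNReal.toReal_mul]
  rfl

variable [IsProbabilityMeasure μ]

lemma IsIID.measureReal_walk_eq (hX : IsIID μ X) (a : ℤ) {n : ℕ} (hn : 0 < n) :
    μ.real {ω | walk X n ω = a} = ∑ k ∈ Icc 1 n,
      μ.real {ω | IsFirstVisit (incrementsFrom X 0 ω) a k} * μ.real {ω | walk X (n - k) ω = 0} := by
  have hsplit : {ω | walk X n ω = a} =
      ⋃ k ∈ Icc 1 n, {ω | IsFirstVisit (incrementsFrom X 0 ω) a k} ∩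
        incrementsFrom X k ⁻¹' {x | partialSum x (n - k) = 0} := by
    ext ω
    simp only [walk, partialSum_eq_iff_exists_isFirstVisit hn, Set.mem_iUnion,
      Set.mem_inter_iff, Set.mem_preimage, exists_prop]
    rfl
  have hmeas : ∀ k, MeasurableSet {x : ℕ → ℤ | partialSum x k = 0} :=
    fun k ↦ measurable_partialSum k (measurableSet_singleton 0)
  rw [hsplit, measureReal_biUnion_finset]
  · exact sum_congr rfl fun k _ ↦ hX.measureReal_inter_incrementsFrom_preimage
      (measurableSet_isFirstVisit_pastSigma a k) (hmeas _)
  · exact fun k _ l _ hkl ↦ Set.disjoint_left.2 fun ω hk hl ↦ hkl (hk.1.eq hl.1)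
  · exact fun k _ ↦
      (pastSigma_le hX.measurable k _ (measurableSet_isFirstVisit_pastSigma a k)).inter
        (measurable_incrementsFrom hX.measurable k (hmeas _))

variable (μ X) in
def greenSum (N : ℕ) : ℝ := ∑ n ∈ range (N + 1), μ.real {ω | walk X n ω = 0}

lemma IsIID.sum_measureReal_walk_eq_le (hX : IsIID μ X) (a : ℤ) (N : ℕ) :
    ∑ n ∈ Icc 1 N, μ.real {ω | walk X n ω = a} ≤
      μ.real {ω | ∃ k, 0 < k ∧ walk X k ω = a} * greenSum μ X N := by
  have hvisit : ∑ k ∈ Icc 1 N, μ.real {ω | IsFirstVisit (incrementsFrom X 0 ω) a k} ≤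
      μ.real {ω | ∃ k, 0 < k ∧ walk X k ω = a} := by
    rw [← measureReal_biUnion_finset
      (fun k _ l _ hkl ↦ Set.disjoint_left.2 fun ω hk hl ↦ hkl (hk.eq hl))
      fun k _ ↦ pastSigma_le hX.measurable k _ (measurableSet_isFirstVisit_pastSigma a k)]
    refine measureReal_mono ?_
    simp only [Set.iUnion_subset_iff]
    exact fun k _ ω hω ↦ ⟨k, hω.1, hω.2.1⟩
  calc ∑ n ∈ Icc 1 N, μ.real {ω | walk X n ω = a}
      = ∑ n ∈ Icc 1 N, ∑ k ∈ Icc 1 n, μ.real {ω | IsFirstVisit (incrementsFrom X 0 ω) a k} *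
          μ.real {ω | walk X (n - k) ω = 0} :=
        sum_congr rfl fun n hn ↦ hX.measureReal_walk_eq a (mem_Icc.1 hn).1
    _ ≤ (∑ k ∈ Icc 1 N, μ.real {ω | IsFirstVisit (incrementsFrom X 0 ω) a k}) *
          greenSum μ X N :=
        sum_Icc_sum_Icc_mul_sub_le
          (f := fun k ↦ μ.real {ω | IsFirstVisit (incrementsFrom X 0 ω) a k})
          (g := fun m ↦ μ.real {ω | walk X m ω = 0}) (fun _ ↦ measureReal_nonneg)
          (fun _ ↦ measureReal_nonneg) N
    _ ≤ _ := mul_le_mul_of_nonneg_right hvisit (sum_nonneg fun _ _ ↦ measureReal_nonneg)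

lemma IsIID.greenSum_le_of_lt_one (hX : IsIID μ X)
    (hr : μ.real {ω | ∃ k, 0 < k ∧ walk X k ω = 0} < 1) (N : ℕ) :
    greenSum μ X N ≤ 1 / (1 - μ.real {ω | ∃ k, 0 < k ∧ walk X k ω = 0}) := by
  have hsplit : greenSum μ X N = 1 + ∑ n ∈ Icc 1 N, μ.real {ω | walk X n ω = 0} := by
    rw [greenSum, range_eq_Ico, sum_eq_sum_Ico_succ_bot (by omega : 0 < N + 1), zero_add,
      Ico_add_one_right_eq_Icc]
    simp
  have hreturns := hX.sum_measureReal_walk_eq_le 0 N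
  rw [le_div_iff₀ (sub_pos.2 hr)]
  linarith

lemma IsIID.tendstoInMeasure_walk_div (hX : IsIID μ X)
    (hint : Integrable (fun ω ↦ (X 0 ω : ℝ)) μ) (hmean : ∫ ω, (X 0 ω : ℝ) ∂μ = 0) :
    TendstoInMeasure μ (fun n ω ↦ (walk X n ω : ℝ) / n) atTop 0 := by
  have hcast : Measurable (fun z : ℤ ↦ (z : ℝ)) := measurable_of_countable _
  have hslln := strong_law_ae_real (fun n ω ↦ (X n ω : ℝ)) hint
    (fun i j hij ↦ (hX.indep.indepFun hij).comp hcast hcast)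
    (fun i ↦ (hX.identDistrib i).comp hcast)
  rw [hmean] at hslln
  refine tendstoInMeasure_of_tendsto_ae (fun n ↦ Measurable.aestronglyMeasurable ?_) ?_
  · exact (hcast.comp (measurable_walk hX.measurable n)).div_const _
  · filter_upwards [hslln] with ω hω
    simpa [walk, partialSum, incrementsFrom] using hω

lemma IsIID.eventually_half_le_measureReal_abs_walk_le (hX : IsIID μ X)
    (hint : Integrable (fun ω ↦ (X 0 ω : ℝ)) μ) (hmean : ∫ ω, (X 0 ω : ℝ) ∂μ = 0)
    {ε : ℝ} (hε : 0 < ε) :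
    ∀ᶠ n : ℕ in atTop, 1 / 2 ≤ μ.real {ω | |(walk X n ω : ℝ)| ≤ ε * n} := by
  have h := tendstoInMeasure_iff_measureReal_norm.1 (hX.tendstoInMeasure_walk_div hint hmean) ε hε
  filter_upwards [h.eventually_lt_const (by norm_num : (0 : ℝ) < 1 / 2), eventually_gt_atTop 0]
    with n hsmall hn
  have hfar : {ω | ε * n < |(walk X n ω : ℝ)|} ⊆
      {ω | ε ≤ ‖(walk X n ω : ℝ) / n - (0 : Ω → ℝ) ω‖} := by
    intro ω hω
    simp only [Set.mem_ofPred_eq, Pi.zero_apply, sub_zero, Real.norm_eq_abs, abs_div,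
      Nat.abs_cast] at hω ⊢
    rw [le_div_iff₀ (by exact_mod_cast hn)]
    exact hω.le
  have hmeas : MeasurableSet {ω | ε * n < |(walk X n ω : ℝ)|} :=
    measurableSet_lt measurable_const
      ((measurable_of_countable (fun z : ℤ ↦ |(z : ℝ)|)).comp (measurable_walk hX.measurable n))
  have hnear : {ω | |(walk X n ω : ℝ)| ≤ ε * n} = {ω | ε * n < |(walk X n ω : ℝ)|}ᶜ := by
    ext ω
    simp [not_lt]
  rw [hnear, probReal_compl_eq_one_sub hmeas]
  linarith [measureReal_mono (μ := μ) hfar]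

lemma measureReal_abs_walk_le_le_sum (hXmeas : ∀ n, Measurable (X n)) {ε : ℝ}
    (hε : 0 < ε) {n N : ℕ} (hnN : n ≤ N) :
    μ.real {ω | |(walk X n ω : ℝ)| ≤ ε * n} ≤
      ∑ a ∈ Icc (-⌊ε * N⌋) ⌊ε * N⌋, μ.real {ω | walk X n ω = a} := by
  refine (measureReal_mono fun ω (hω : |(walk X n ω : ℝ)| ≤ ε * n) ↦ ?_).trans_eq
    (sum_measureReal_preimage_singleton (μ := μ) (f := walk X n) _
      fun a _ ↦ measurable_walk hXmeas n (measurableSet_singleton a)).symm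
  have hbound := abs_le.1 hω
  have hεn : ε * n ≤ ε * N := mul_le_mul_of_nonneg_left (by exact_mod_cast hnN) hε.le
  rw [Set.mem_preimage, coe_Icc, Set.mem_Icc]
  refine ⟨neg_le.1 (Int.le_floor.2 ?_), Int.le_floor.2 ?_⟩ <;> push_cast <;> linarith

lemma IsIID.exists_le_mul_greenSum (hX : IsIID μ X)
    (hint : Integrable (fun ω ↦ (X 0 ω : ℝ)) μ) (hmean : ∫ ω, (X 0 ω : ℝ) ∂μ = 0)
    {ε : ℝ} (hε : 0 < ε) :
    ∃ n₀ : ℕ, ∀ N ≥ n₀, ((N : ℝ) + 1 - n₀) / 2 ≤ (2 * (ε * N) + 1) * greenSum μ X N := by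
  obtain ⟨n₀, hn₀⟩ := eventually_atTop.1
    ((hX.eventually_half_le_measureReal_abs_walk_le hint hmean hε).and (eventually_gt_atTop 0))
  refine ⟨n₀, fun N hN ↦ ?_⟩
  set B := ⌊ε * N⌋
  have hG : 0 ≤ greenSum μ X N := sum_nonneg fun _ _ ↦ measureReal_nonneg
  have hpos : 1 ≤ n₀ := (hn₀ n₀ le_rfl).2
  calc ((N : ℝ) + 1 - n₀) / 2 = ∑ n ∈ Icc n₀ N, (1 / 2 : ℝ) := by
        rw [sum_const, Nat.card_Icc, nsmul_eq_mul, Nat.cast_sub (by omega)]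
        push_cast
        ring
    _ ≤ ∑ n ∈ Icc n₀ N, μ.real {ω | |(walk X n ω : ℝ)| ≤ ε * n} :=
        sum_le_sum fun n hn ↦ (hn₀ n (mem_Icc.1 hn).1).1
    _ ≤ ∑ n ∈ Icc n₀ N, ∑ a ∈ Icc (-B) B, μ.real {ω | walk X n ω = a} := sum_le_sum fun n hn ↦
        measureReal_abs_walk_le_le_sum hX.measurable hε (mem_Icc.1 hn).2
    _ ≤ ∑ n ∈ Icc 1 N, ∑ a ∈ Icc (-B) B, μ.real {ω | walk X n ω = a} :=
        sum_le_sum_of_subset_of_nonneg (Icc_subset_Icc_left hpos)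
          fun _ _ _ ↦ sum_nonneg fun _ _ ↦ measureReal_nonneg
    _ = ∑ a ∈ Icc (-B) B, ∑ n ∈ Icc 1 N, μ.real {ω | walk X n ω = a} := sum_comm
    _ ≤ ∑ a ∈ Icc (-B) B, greenSum μ X N := sum_le_sum fun a _ ↦
        (hX.sum_measureReal_walk_eq_le a N).trans (mul_le_of_le_one_left hG measureReal_le_one)
    _ = (Icc (-B) B).card * greenSum μ X N := by rw [sum_const, nsmul_eq_mul]
    _ ≤ (2 * (ε * N) + 1) * greenSum μ X N :=
        mul_le_mul_of_nonneg_right (card_Icc_neg_floor_le (mul_nonneg hε.le N.cast_nonneg)) hG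

lemma IsIID.measureReal_exists_walk_eq_zero (hX : IsIID μ X)
    (hint : Integrable (fun ω ↦ (X 0 ω : ℝ)) μ) (hmean : ∫ ω, (X 0 ω : ℝ) ∂μ = 0) :
    μ.real {ω | ∃ k, 0 < k ∧ walk X k ω = 0} = 1 := by
  set r := μ.real {ω | ∃ k, 0 < k ∧ walk X k ω = 0}
  by_contra hr
  have hr1 : r < 1 := lt_of_le_of_ne measureReal_le_one hr
  set C := 1 / (1 - r)
  have hC : 0 < C := one_div_pos.2 (sub_pos.2 hr1)
  obtain ⟨n₀, hn₀⟩ := hX.exists_le_mul_greenSum hint hmean (by positivity : 0 < 1 / (8 * C))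
  obtain ⟨N, hN⟩ := exists_nat_gt (4 * C + 2 * n₀)
  have hlower := hn₀ N (by exact_mod_cast (by linarith : (n₀ : ℝ) ≤ N))
  have hupper : (2 * (1 / (8 * C) * N) + 1) * greenSum μ X N ≤ N / 4 + C :=
    calc (2 * (1 / (8 * C) * N) + 1) * greenSum μ X N
        ≤ (2 * (1 / (8 * C) * N) + 1) * C :=
          mul_le_mul_of_nonneg_left (hX.greenSum_le_of_lt_one hr1 N) (by positivity)
      _ = N / 4 + C := by field_simp; ring
  linarith

lemma IsIID.ae_forall_exists_walk_add_eq (hX : IsIID μ X)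
    (hint : Integrable (fun ω ↦ (X 0 ω : ℝ)) μ) (hmean : ∫ ω, (X 0 ω : ℝ) ∂μ = 0) :
    ∀ᵐ ω ∂μ, ∀ j, ∃ k, 0 < k ∧ walk X (j + k) ω = walk X j ω := by
  have hmeas : MeasurableSet {x : ℕ → ℤ | ∃ k, 0 < k ∧ partialSum x k = 0} := by
    simp only [Set.ofPred_exists, Set.ofPred_and]
    exact MeasurableSet.iUnion fun k ↦ (MeasurableSet.const _).inter
      (measurable_partialSum k (measurableSet_singleton 0))
  have hreturn : ∀ᵐ ω ∂μ, ∃ k, 0 < k ∧ partialSum (incrementsFrom X 0 ω) k = 0 := by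
    rw [ae_iff_measure_eq (p := fun ω ↦ ∃ k, 0 < k ∧ partialSum (incrementsFrom X 0 ω) k = 0)
      (measurable_incrementsFrom hX.measurable 0 hmeas).nullMeasurableSet, measure_univ]
    exact (ENNReal.toReal_eq_one_iff _).1 (hX.measureReal_exists_walk_eq_zero hint hmean)
  refine ae_all_iff.2 fun j ↦ ?_
  filter_upwards [(hX.identDistrib_incrementsFrom j).symm.ae_snd hmeas hreturn]
    with ω ⟨k, hk, hret⟩
  refine ⟨k, hk, ?_⟩
  rw [walk, partialSum_add, ← walk]
  exact add_eq_left.2 hret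

end RandomWalk

open RandomWalk in
theorem stmt12_general {Ω : Type*} [MeasureSpace Ω] [IsProbabilityMeasure (ℙ : Measure Ω)]
    (X : ℕ → Ω → ℤ) (S : ℕ → Ω → ℤ)
    (hXmeas : ∀ n, Measurable (X n))
    (hXindep : iIndepFun X ℙ)
    (hXident : ∀ n, IdentDistrib (X n) (X 0) ℙ ℙ)
    (hint : Integrable (fun ω => ((X 0 ω : ℤ) : ℝ)) ℙ)
    (hmean : ∫ ω, ((X 0 ω : ℤ) : ℝ) ∂ℙ = 0)
    (hS0 : ∀ ω, S 0 ω = 0)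
    (hstep : ∀ n ω, S (n + 1) ω = S n ω + X n ω) :
    ∀ᵐ ω ∂ℙ, {n : ℕ | S n ω = 0}.Infinite := by
  have hS : ∀ n ω, S n ω = walk X n ω := by
    intro n ω
    induction n with
    | zero => rw [hS0, walk_zero]
    | succ n ih => rw [hstep, ih, walk_succ]
  have hX : IsIID ℙ X := ⟨hXmeas, hXindep, hXident⟩
  filter_upwards [hX.ae_forall_exists_walk_add_eq hint hmean] with ω hω
  refine Set.infinite_of_forall_mem_exists_gt ⟨0, hS0 ω⟩ fun j hj ↦ ?_
  obtain ⟨k, hk, hret⟩ := hω j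
  refine ⟨j + k, ?_, by omega⟩
  rw [Set.mem_ofPred_eq, hS] at hj ⊢
  rw [hret, hj]

theorem stmt12 {Ω : Type*} [MeasureSpace Ω] [IsProbabilityMeasure (ℙ : Measure Ω)]
    (X : ℕ → Ω → ℤ) (S : ℕ → Ω → ℤ)
    (hXmeas : ∀ n, Measurable (X n))
    (hXindep : iIndepFun X ℙ)
    (hXident : ∀ n, IdentDistrib (X n) (X 0) ℙ ℙ)
    (hint : Integrable (fun ω => ((X 0 ω : ℤ) : ℝ)) ℙ)
    (hmean : ∫ ω, ((X 0 ω : ℤ) : ℝ) ∂ℙ = 0)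
    -- irreducibility: the support of the step distribution generates ℤ
    (hirr : ∀ x : ℤ, ∃ (n : ℕ) (f : Fin n → ℤ),
      (∀ i, 0 < ℙ {ω | X 0 ω = f i}) ∧ ∑ i, f i = x)
    (hS0 : ∀ ω, S 0 ω = 0)
    (hstep : ∀ n ω, S (n + 1) ω = S n ω + X n ω) :
    ∀ᵐ ω ∂ℙ, {n : ℕ | S n ω = 0}.Infinite :=
  stmt12_general X S hXmeas hXindep hXident hint hmean hS0 hstep
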